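/- arXiv:1801.06824 — 2 statements merged into one kernel-verified Lean document; each statement's English description precedes it below -/
import Mathlib

section
/- For every positive integer i, let G_i be the full join of a path P on i² vertices and an independent set A on i vertices. Then every non-empty set I of vertices of G_i with fan(G_i[I]) ≤ i fails to be an i-island; consequently col_{fan,i}(G_i) ≥ i+1. -/
/-- The full join of a path on `i²` vertices and an independent set on `i` vertices. -/
def fullJoinPathIndep (i : ℕ) : SimpleGraph (Fin (i ^ 2) ⊕ Fin i) where
  Adj x y :=
    match x, y with
    | .inl a, .inl b => (a : ℕ) + 1 = b ∨ (b : ℕ) + 1 = a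
    | .inl _, .inr _ => True
    | .inr _, .inl _ => True
    | .inr _, .inr _ => False
  symm := ⟨by rintro (a | a) (b | b) h <;> simp_all <;> tauto⟩
  loopless := ⟨by rintro (a | a) h <;> simp_all⟩

/-!
Cut the path into `i` consecutive blocks of `i` vertices. If `I` contains a vertex `a` of the
independent set, then either some block lies inside `I`, and `a` together with that block is a
fan with `i` path vertices, or every block has a vertex outside `I`, giving `a` at least `i`
neighbours outside `I`. If `I` misses the independent set, any vertex of `I` lies on the path
and all `i` vertices of the independent set are its neighbours outside `I`.
-/

theorem Set.le_ncard_of_injective {α : Type*} [Finite α] {s : Set α} {n : ℕ} (f : Fin n → α)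
    (hf : Function.Injective f) (hs : ∀ k, f k ∈ s) : n ≤ s.ncard := by
  simpa using Set.ncard_le_ncard_of_injOn f (s := Set.univ) (fun k _ => hs k) hf.injOn

namespace fullJoinPathIndep

variable {i : ℕ}

theorem adj_inl_inr (a : Fin (i ^ 2)) (b : Fin i) :
    (fullJoinPathIndep i).Adj (.inl a) (.inr b) := trivial

theorem adj_inr_inl (a : Fin i) (b : Fin (i ^ 2)) :
    (fullJoinPathIndep i).Adj (.inr a) (.inl b) := trivial

theorem adj_inl_inl_of_succ {a b : Fin (i ^ 2)} (h : (a : ℕ) + 1 = b) :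
    (fullJoinPathIndep i).Adj (.inl a) (.inl b) := Or.inl h

def block (i : ℕ) : Fin i × Fin i ↪ Fin (i ^ 2) :=
  (finProdFinEquiv.trans (finCongr (sq i).symm)).toEmbedding

theorem block_val (k j : Fin i) : (block i (k, j) : ℕ) = j + i * k := rfl

theorem exists_fan_of_block_subset {I : Finset (Fin (i ^ 2) ⊕ Fin i)} {a : Fin i}
    (ha : .inr a ∈ I) {k : Fin i} (hk : ∀ j, .inl (block i (k, j)) ∈ I) :
    ∃ u ∈ I, ∃ v : Fin i → Fin (i ^ 2) ⊕ Fin i,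
      (∀ j, v j ∈ I) ∧ Function.Injective v ∧ (∀ j, v j ≠ u) ∧
      (∀ j, (fullJoinPathIndep i).Adj u (v j)) ∧
      (∀ j j' : Fin i, (j : ℕ) + 1 = (j' : ℕ) → (fullJoinPathIndep i).Adj (v j) (v j')) := by
  refine ⟨.inr a, ha, fun j => .inl (block i (k, j)), hk, ?_, fun j => Sum.inl_ne_inr,
    fun j => adj_inr_inl _ _, fun j j' h => adj_inl_inl_of_succ ?_⟩
  · intro j j' h
    simpa using Sum.inl_injective h
  · simp only [block_val]
    omega

theorem le_ncard_outside_nbrs_of_blocks {I : Finset (Fin (i ^ 2) ⊕ Fin i)} (a : Fin i)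
    (hblocks : ∀ k : Fin i, ∃ j, .inl (block i (k, j)) ∉ I) :
    i ≤ {w | (fullJoinPathIndep i).Adj (.inr a) w ∧ w ∉ I}.ncard := by
  choose c hc using hblocks
  refine Set.le_ncard_of_injective (fun k => .inl (block i (k, c k))) ?_
    fun k => ⟨adj_inr_inl _ _, hc k⟩
  intro k k' h
  exact congrArg Prod.fst ((block i).injective (Sum.inl_injective h))

theorem le_ncard_outside_nbrs_of_disjoint {I : Finset (Fin (i ^ 2) ⊕ Fin i)}
    (hA : ∀ a : Fin i, .inr a ∉ I) (x : Fin (i ^ 2)) :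
    i ≤ {w | (fullJoinPathIndep i).Adj (.inl x) w ∧ w ∉ I}.ncard :=
  Set.le_ncard_of_injective _ Sum.inr_injective fun b => ⟨adj_inl_inr _ _, hA b⟩

end fullJoinPathIndep

open fullJoinPathIndep in
theorem stmt_2_general (i : ℕ)
    (I : Finset (Fin (i ^ 2) ⊕ Fin i)) (hne : I.Nonempty)
    (hfan : ∀ m : ℕ, i ≤ m →
      ¬ ∃ u ∈ I, ∃ v : Fin m → Fin (i ^ 2) ⊕ Fin i,
          (∀ j, v j ∈ I) ∧ Function.Injective v ∧ (∀ j, v j ≠ u) ∧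
          (∀ j, (fullJoinPathIndep i).Adj u (v j)) ∧
          (∀ j k : Fin m, (j : ℕ) + 1 = (k : ℕ) → (fullJoinPathIndep i).Adj (v j) (v k))) :
    ∃ v ∈ I, i ≤ {w | (fullJoinPathIndep i).Adj v w ∧ w ∉ I}.ncard := by
  by_cases hA : ∃ a : Fin i, .inr a ∈ I
  · obtain ⟨a, ha⟩ := hA
    refine ⟨.inr a, ha, le_ncard_outside_nbrs_of_blocks a fun k => ?_⟩
    by_contra! hk
    exact hfan i le_rfl (exists_fan_of_block_subset ha hk)
  · push Not at hA
    obtain ⟨x | b, hx⟩ := hne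
    · exact ⟨.inl x, hx, le_ncard_outside_nbrs_of_disjoint hA x⟩
    · exact absurd hx (hA b)

/-- every non-empty vertex set `I` of `G_i` with `fan(G_i[I]) ≤ i`
(no fan on more than `i` vertices inside `I`, i.e. no fan with `m ≥ i` path vertices)
fails to be an `i`-island: some vertex of `I` has at least `i` neighbors outside `I`. -/
theorem stmt_2 (i : ℕ) (hi : 1 ≤ i)
    (I : Finset (Fin (i ^ 2) ⊕ Fin i)) (hne : I.Nonempty)
    (hfan : ∀ m : ℕ, i ≤ m →
      ¬ ∃ u ∈ I, ∃ v : Fin m → Fin (i ^ 2) ⊕ Fin i,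
          (∀ j, v j ∈ I) ∧ Function.Injective v ∧ (∀ j, v j ≠ u) ∧
          (∀ j, (fullJoinPathIndep i).Adj u (v j)) ∧
          (∀ j k : Fin m, (j : ℕ) + 1 = (k : ℕ) → (fullJoinPathIndep i).Adj (v j) (v k))) :
    ∃ v ∈ I, i ≤ {w | (fullJoinPathIndep i).Adj v w ∧ w ∉ I}.ncard :=
  stmt_2_general i I hne hfan
end

section
/- Let t, n, p′ be positive integers with n ≥ p′(t+1) + t + 1, and let P_n^t be the t-th power of the path on n vertices. Then every non-empty vertex set I of P_n^t of size at most p′ contains a vertex with at least t neighbors outside I; consequently P_n^t has no t-island of size at most p′ and col_{⋆,p′}(P_n^t) ≥ t+1. -/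
/-!
Cut `{0, …, n-1}` into `p' + 1` consecutive blocks of `t + 1` vertices. A set `I` of at most `p'`
vertices misses one of them, say `[b, b + t]`. If `I` has a vertex below the block, its largest one
`v` has the `t` vertices `v + 1, …, v + t` outside `I`; otherwise the least vertex `v` of `I` lies
above the block and `v - t, …, v - 1` are outside `I`.
-/

/-- The `t`-th power `P_n^t` of the path on `n` vertices: `i ~ j` iff `1 ≤ |i - j| ≤ t`. -/
def pathPower (t n : ℕ) : SimpleGraph (Fin n) where
  Adj i j := i ≠ j ∧ (i : ℕ) - (j : ℕ) ≤ t ∧ (j : ℕ) - (i : ℕ) ≤ t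
  symm := by constructor; intro i j h; exact ⟨h.1.symm, h.2.2, h.2.1⟩
  loopless := by constructor; intro i h; exact h.1 rfl

theorem Finset.exists_le_card_forall_lt_or_le (s : Finset ℕ) (k : ℕ) :
    ∃ j ≤ s.card, ∀ a ∈ s, a < j * k ∨ (j + 1) * k ≤ a := by
  obtain ⟨j, hj, hjs⟩ : ∃ j ∈ Finset.range (s.card + 1), j ∉ s.image (· / k) :=
    Finset.exists_mem_notMem_of_card_lt_card
      (Finset.card_image_le.trans_lt (by simp))
  refine ⟨j, Finset.mem_range_succ_iff.mp hj, fun a ha => ?_⟩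
  by_contra! hblock
  exact hjs (Finset.mem_image.mpr ⟨a, ha, Nat.div_eq_of_lt_le hblock.1 hblock.2⟩)

namespace pathPower

variable {t n : ℕ} {I : Finset (Fin n)} {v : Fin n}

theorem le_ncard_of_gap_above (hvn : (v : ℕ) + t < n)
    (hgap : ∀ w ∈ I, v < w → (v : ℕ) + t < w) :
    t ≤ {w | (pathPower t n).Adj v w ∧ w ∉ I}.ncard := by
  let top : Fin n := ⟨v + t, hvn⟩
  have hsub : (Finset.Ioc v top : Set (Fin n)) ⊆ {w | (pathPower t n).Adj v w ∧ w ∉ I} := by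
    intro w hw
    simp only [Finset.coe_Ioc, Set.mem_Ioc, Fin.lt_def, Fin.le_def, top] at hw
    refine ⟨⟨Fin.ne_of_lt (Fin.lt_def.mpr hw.1), by omega, by omega⟩, fun hwI => ?_⟩
    have := hgap w hwI (Fin.lt_def.mpr hw.1)
    omega
  calc t = (Finset.Ioc v top).card := by simp [Fin.card_Ioc, top]
    _ = (Finset.Ioc v top : Set (Fin n)).ncard := (Set.ncard_coe_finset _).symm
    _ ≤ _ := Set.ncard_le_ncard hsub

theorem le_ncard_of_gap_below (hvt : t ≤ (v : ℕ))
    (hgap : ∀ w ∈ I, w < v → (w : ℕ) + t < v) :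
    t ≤ {w | (pathPower t n).Adj v w ∧ w ∉ I}.ncard := by
  let bot : Fin n := ⟨v - t, by omega⟩
  have hsub : (Finset.Ico bot v : Set (Fin n)) ⊆ {w | (pathPower t n).Adj v w ∧ w ∉ I} := by
    intro w hw
    simp only [Finset.coe_Ico, Set.mem_Ico, Fin.lt_def, Fin.le_def, bot] at hw
    refine ⟨⟨(Fin.ne_of_lt (Fin.lt_def.mpr hw.2)).symm, by omega, by omega⟩, fun hwI => ?_⟩
    have := hgap w hwI (Fin.lt_def.mpr hw.2)
    omega
  calc t = (Finset.Ico bot v).card := by simp [Fin.card_Ico, bot]; omega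
    _ = (Finset.Ico bot v : Set (Fin n)).ncard := (Set.ncard_coe_finset _).symm
    _ ≤ _ := Set.ncard_le_ncard hsub

theorem exists_le_ncard_of_disjoint_window (hne : I.Nonempty) {b : ℕ} (hbn : b + t < n)
    (hwindow : ∀ w ∈ I, (w : ℕ) < b ∨ b + t < w) :
    ∃ v ∈ I, t ≤ {w | (pathPower t n).Adj v w ∧ w ∉ I}.ncard := by
  by_cases hlow : ∃ w ∈ I, (w : ℕ) < b
  · have hJ : (I.filter fun w : Fin n => (w : ℕ) < b).Nonempty := by
      obtain ⟨w, hwI, hwb⟩ := hlow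
      exact ⟨w, Finset.mem_filter.mpr ⟨hwI, hwb⟩⟩
    obtain ⟨hvI, hvb⟩ := Finset.mem_filter.mp (Finset.max'_mem _ hJ)
    refine ⟨_, hvI, le_ncard_of_gap_above (by omega) fun w hwI hvw => ?_⟩
    by_contra! hwt
    have hwb : (w : ℕ) < b := by have := hwindow w hwI; omega
    exact hvw.not_ge (Finset.le_max' _ w (Finset.mem_filter.mpr ⟨hwI, hwb⟩))
  · push Not at hlow
    have hvb : b + t < (I.min' hne : ℕ) := by
      have := hlow _ (I.min'_mem hne); have := hwindow _ (I.min'_mem hne); omega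
    refine ⟨_, I.min'_mem hne, le_ncard_of_gap_below (by omega) fun w hwI hwv => ?_⟩
    exact absurd (I.min'_le w hwI) hwv.not_ge

end pathPower

theorem stmt_14_general (t n p' : ℕ)
    (hn : p' * (t + 1) + t + 1 ≤ n)
    (I : Finset (Fin n)) (hne : I.Nonempty) (hcard : I.card ≤ p') :
    ∃ v ∈ I, t ≤ {w | (pathPower t n).Adj v w ∧ w ∉ I}.ncard := by
  obtain ⟨j, hj, hblock⟩ := (I.map Fin.valEmbedding).exists_le_card_forall_lt_or_le (t + 1)
  rw [Finset.card_map] at hj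
  have hjp : j * (t + 1) ≤ p' * (t + 1) := Nat.mul_le_mul_right _ (hj.trans hcard)
  refine pathPower.exists_le_ncard_of_disjoint_window hne (b := j * (t + 1)) (by omega)
    fun w hw => ?_
  have := hblock w (Finset.mem_map_of_mem _ hw)
  rw [add_one_mul] at this
  omega

/-- if `n ≥ p'(t+1) + t + 1`, then every nonempty vertex set `I` of
`P_n^t` of size at most `p'` contains a vertex with at least `t` neighbors outside `I`;
hence `P_n^t` has no `t`-island of size at most `p'`. -/
theorem stmt_14 (t n p' : ℕ) (ht : 1 ≤ t) (hp' : 1 ≤ p')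
    (hn : p' * (t + 1) + t + 1 ≤ n)
    (I : Finset (Fin n)) (hne : I.Nonempty) (hcard : I.card ≤ p') :
    ∃ v ∈ I, t ≤ {w | (pathPower t n).Adj v w ∧ w ∉ I}.ncard :=
  stmt_14_general t n p' hn I hne hcard
end
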